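/- In the Cantor dyadic group FMRA setting with |E| = 0, the function ψ with ψ̂ = m_ψ · (φ̂ ∘ σ) satisfies: for a.e. ω ∈ Δ₂, Σ_{n∈Λ}|ψ̂(ω+n)|² = (Σ_{n∈Λ}|φ̂(ω+n)|²)·(Σ_{n∈Λ}|φ̂(σω+n)|²)·(Σ_{n∈Λ}|φ̂(σω+0.1+n)|²). -/

import Mathlib

/-!
Common setting: the Vilenkin group `Vil p` (sequences `ℤ → ZMod p` vanishing
below some index), its discrete subgroup `H`, the neighbourhood `U`,
the shift automorphism, the generalized characters, and a bundled structure
`VilenkinSetting` carrying the Haar measures on the group and on its dual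
(realized on the same underlying sequence space), the Plancherel (Fourier)
transform, translations and the dilation operator, with their standard
compatibility properties.
-/

open MeasureTheory Filter Topology
open scoped ENNReal NNReal Pointwise Classical ComplexConjugate

noncomputable section

/-- The underlying additive group of the Vilenkin group: sequences
`x : ℤ → ZMod p` with `x j = 0` for all `j` below some `k = k(x)`. -/
def vilCarrier (p : ℕ) : AddSubgroup (ℤ → ZMod p) where
  carrier := {x | ∃ k : ℤ, ∀ j < k, x j = 0}
  zero_mem' := ⟨0, fun _ _ => rfl⟩
  add_mem' := by
    rintro a b ⟨k, hk⟩ ⟨l, hl⟩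
    refine ⟨min k l, fun j hj => ?_⟩
    have h1 := hk j (lt_of_lt_of_le hj (min_le_left _ _))
    have h2 := hl j (lt_of_lt_of_le hj (min_le_right _ _))
    simp_all [Pi.add_apply]
  neg_mem' := by
    rintro a ⟨k, hk⟩
    exact ⟨k, fun j hj => by simp [hk j hj]⟩

/-- The Vilenkin group (as a type). The dual group `G̃*` is realized on the
same type of sequences. -/
abbrev Vil (p : ℕ) : Type := vilCarrier p

/-- The discrete subgroup `H = {x : x_j = 0 for j > 0}` of the Vilenkin group.
On the dual side the same subgroup realizes the annihilator `H⊥`. -/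
def Hsub (p : ℕ) : AddSubgroup (Vil p) where
  carrier := {x | ∀ j > 0, (x : ℤ → ZMod p) j = 0}
  zero_mem' := fun _ _ => rfl
  add_mem' := by
    intro a b ha hb j hj
    simp [ha j hj, hb j hj]
  neg_mem' := by
    intro a ha j hj
    simp [ha j hj]

/-- The subgroup-neighbourhoods `U_l = {x : x_j = 0 for j ≤ l}` (as sets). -/
def UsetL (p : ℕ) (l : ℤ) : Set (Vil p) := {x | ∀ j ≤ l, (x : ℤ → ZMod p) j = 0}

/-- `U = U_0`; on the dual side this realizes `U*`. -/
def Uset (p : ℕ) : Set (Vil p) := UsetL p 0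

/-- The topology of the Vilenkin group, generated by cosets of the `U_l`. -/
instance (p : ℕ) : TopologicalSpace (Vil p) :=
  TopologicalSpace.generateFrom {s | ∃ (x : Vil p) (l : ℤ), s = (x + ·) '' UsetL p l}

/-- The Borel σ-algebra on the Vilenkin group. -/
instance (p : ℕ) : MeasurableSpace (Vil p) := borel (Vil p)

/-- The shift automorphism `A` (resp. `B` on the dual side): `(Ax)_j = x_{j+1}`. -/
def shiftMap (p : ℕ) : Vil p ≃+ Vil p where
  toFun x := ⟨fun j => (x : ℤ → ZMod p) (j + 1), by
    obtain ⟨k, hk⟩ := x.2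
    exact ⟨k - 1, fun j hj => hk _ (by omega)⟩⟩
  invFun x := ⟨fun j => (x : ℤ → ZMod p) (j - 1), by
    obtain ⟨k, hk⟩ := x.2
    exact ⟨k + 1, fun j hj => hk _ (by omega)⟩⟩
  left_inv x :=
    Subtype.ext (funext fun j =>
      congrArg (x : ℤ → ZMod p) (show j - 1 + 1 = j by omega))
  right_inv x :=
    Subtype.ext (funext fun j =>
      congrArg (x : ℤ → ZMod p) (show j + 1 - 1 = j by omega))
  map_add' x y := by
    apply Subtype.ext
    funext j
    rfl

/-- The element `0.ζ` of the (dual) Vilenkin group: coordinate `ζ` in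
position `1` and `0` elsewhere. -/
def dotEl (p : ℕ) (ζ : ZMod p) : Vil p :=
  ⟨fun j => if j = 1 then ζ else 0, ⟨1, fun j hj => if_neg (by omega)⟩⟩

/-- The generalized Walsh character pairing
`χ(x, ω) = exp((2πi/p) Σ_j x_j ω_{1-j})`. -/
def vilChar (p : ℕ) (x ω : Vil p) : ℂ :=
  Complex.exp (2 * Real.pi * Complex.I *
    (((∑ᶠ j : ℤ, (x : ℤ → ZMod p) j * (ω : ℤ → ZMod p) (1 - j)).val : ℂ) / (p : ℂ)))

/-- A bundled Vilenkin-group setting: Haar measures `μ` (on `G̃`) and `ν`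
(on the dual `G̃*`, realized on the same sequence space), normalized so that
`U` (resp. `U*`) has measure one, the Plancherel/Fourier transform `F`,
the translation operators `T`, the dilation operator `Dil`, and their
standard compatibility properties. -/
structure VilenkinSetting (p : ℕ) where
  /-- Haar measure on the Vilenkin group `G̃`. -/
  μ : Measure (Vil p)
  /-- Haar measure on the dual group `G̃*`. -/
  ν : Measure (Vil p)
  μ_inv : ∀ g : Vil p, MeasurePreserving (fun x => x + g) μ μ
  ν_inv : ∀ g : Vil p, MeasurePreserving (fun x => x + g) ν ν
  μ_U : μ (Uset p) = 1
  ν_U : ν (Uset p) = 1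
  /-- The Fourier (Plancherel) transform `f ↦ f̂`, a unitary from `L²(G̃)`
  onto `L²(G̃*)`. -/
  F : Lp ℂ 2 μ ≃ₗᵢ[ℂ] Lp ℂ 2 ν
  /-- The translation operators `T_g f = f(· ⊖ g)`. -/
  T : Vil p → (Lp ℂ 2 μ ≃ₗᵢ[ℂ] Lp ℂ 2 μ)
  T_apply : ∀ (g : Vil p) (f : Lp ℂ 2 μ),
    (T g f : Vil p → ℂ) =ᵐ[μ] fun x => f (x - g)
  F_T : ∀ h ∈ Hsub p, ∀ f : Lp ℂ 2 μ,
    (F (T h f) : Vil p → ℂ) =ᵐ[ν] fun ω => vilChar p h ω * F f ω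
  /-- The dilation operator `(𝔻f)(x) = p^{1/2} f(Ax)`. -/
  Dil : Lp ℂ 2 μ ≃ₗᵢ[ℂ] Lp ℂ 2 μ
  Dil_apply : ∀ f : Lp ℂ 2 μ,
    (Dil f : Vil p → ℂ) =ᵐ[μ] fun x => (Real.sqrt p : ℂ) * f (shiftMap p x)
  F_Dil : ∀ f : Lp ℂ 2 μ,
    (F (Dil f) : Vil p → ℂ) =ᵐ[ν] fun ω =>
      ((Real.sqrt p)⁻¹ : ℂ) * F f ((shiftMap p).symm ω)

namespace VilenkinSetting

variable {p : ℕ} (S : VilenkinSetting p)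

/-- The principal shift-invariant space `⟨φ⟩`, the closed linear span of the
translates `T_h φ`, `h ∈ H`. -/
def pSIS (φ : Lp ℂ 2 S.μ) : Submodule ℂ (Lp ℂ 2 S.μ) :=
  (Submodule.span ℂ (Set.range fun h : Hsub p => S.T h φ)).topologicalClosure

/-- Periodization of a function on the dual group:
`Σ_{h ∈ H⊥} |g(ω ⊕ h)|²` (valued in `ℝ≥0∞`). -/
def perF (g : Vil p → ℂ) (ω : Vil p) : ℝ≥0∞ :=
  ∑' h : Hsub p, (‖g (ω + (h : Vil p))‖₊ : ℝ≥0∞) ^ 2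

/-- The periodization function `P_φ(ω) = Σ_{h ∈ H⊥} |φ̂(ω ⊕ h)|²`. -/
def Pper (φ : Lp ℂ 2 S.μ) (ω : Vil p) : ℝ≥0∞ :=
  perF (S.F φ) ω

/-- `E_φ = supp P_φ`. -/
def Eset (φ : Lp ℂ 2 S.μ) : Set (Vil p) := {ω | S.Pper φ ω ≠ 0}

/-- `V_φ = {ω ∈ U* : φ̂_{‖ω} ≠ 0}`. -/
def Vset (φ : Lp ℂ 2 S.μ) : Set (Vil p) :=
  {ω ∈ Uset p | ∃ h ∈ Hsub p, S.F φ (ω + h) ≠ 0}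

/-- The spectrum `η(𝕊) = {ω ∈ U* : 𝕊̂_{‖ω} ≠ {0}}` of a subspace
`𝕊 ⊆ L²(G̃)`. -/
def spec (V : Submodule ℂ (Lp ℂ 2 S.μ)) : Set (Vil p) :=
  {ω ∈ Uset p | ∃ f ∈ V, ∃ h ∈ Hsub p, S.F f (ω + h) ≠ 0}

/-- The quantity `Σ_{h∈H} |⟨f, T_h φ⟩|²` appearing in the frame conditions. -/
def frameSum (φ f : Lp ℂ 2 S.μ) : ℝ :=
  ∑' h : Hsub p, ‖(inner ℂ f (S.T h φ) : ℂ)‖ ^ 2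

/-- `(T_h φ)_{h∈H}` is a Bessel sequence with some bound `b > 0`. -/
def IsBessel (φ : Lp ℂ 2 S.μ) : Prop :=
  ∃ b : ℝ, 0 < b ∧ ∀ f : Lp ℂ 2 S.μ, S.frameSum φ f ≤ b * ‖f‖ ^ 2

/-- `(T_h φ)_{h∈H}` is a frame for the closed subspace `W` with bounds
`a ≤ b`: the translates span `W` and the frame inequalities hold on `W`. -/
def IsFrameFor (φ : Lp ℂ 2 S.μ) (W : Submodule ℂ (Lp ℂ 2 S.μ)) (a b : ℝ) : Prop :=
  S.pSIS φ = W ∧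
    ∀ f ∈ W, a * ‖f‖ ^ 2 ≤ S.frameSum φ f ∧ S.frameSum φ f ≤ b * ‖f‖ ^ 2

/-- `(T_h φ)_{h∈H}` is a Parseval frame for the closed subspace `W`. -/
def IsParsevalFrameFor (φ : Lp ℂ 2 S.μ) (W : Submodule ℂ (Lp ℂ 2 S.μ)) : Prop :=
  S.pSIS φ = W ∧ ∀ f ∈ W, S.frameSum φ f = ‖f‖ ^ 2

/-- The common part of the definitions of MRA and FMRA: a nested sequence of
closed subspaces, compatible with the dilation, with dense union and trivial
intersection. -/
def IsLadder (V : ℤ → Submodule ℂ (Lp ℂ 2 S.μ)) : Prop :=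
  (∀ j, IsClosed (V j : Set (Lp ℂ 2 S.μ))) ∧
  (∀ j, V j ≤ V (j + 1)) ∧
  (∀ j, ∀ f : Lp ℂ 2 S.μ, f ∈ V j ↔ S.Dil f ∈ V (j + 1)) ∧
  Dense (⋃ j : ℤ, (V j : Set (Lp ℂ 2 S.μ))) ∧
  (∀ f : Lp ℂ 2 S.μ, (∀ j : ℤ, f ∈ V j) → f = 0)

/-- `(V_j)` is an MRA with scaling function `φ`: the translates of `φ` form
an orthonormal basis of `V₀`. -/
def IsMRA (V : ℤ → Submodule ℂ (Lp ℂ 2 S.μ)) (φ : Lp ℂ 2 S.μ) : Prop :=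
  S.IsLadder V ∧ φ ∈ V 0 ∧ S.pSIS φ = V 0 ∧
    Orthonormal ℂ (fun h : Hsub p => S.T h φ)

/-- `(V_j)` is an FMRA with scaling function `φ` and frame bounds `a ≤ b`. -/
def IsFMRAWith (V : ℤ → Submodule ℂ (Lp ℂ 2 S.μ)) (φ : Lp ℂ 2 S.μ) (a b : ℝ) : Prop :=
  S.IsLadder V ∧ φ ∈ V 0 ∧ 0 < a ∧ a ≤ b ∧ S.IsFrameFor φ (V 0) a b

/-- `(V_j)` is an FMRA with scaling function `φ`. -/
def IsFMRA (V : ℤ → Submodule ℂ (Lp ℂ 2 S.μ)) (φ : Lp ℂ 2 S.μ) : Prop :=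
  ∃ a b : ℝ, S.IsFMRAWith V φ a b

/-- `(V_j)` is a Parseval FMRA with scaling function `φ`. -/
def IsParsevalFMRA (V : ℤ → Submodule ℂ (Lp ℂ 2 S.μ)) (φ : Lp ℂ 2 S.μ) : Prop :=
  S.IsLadder V ∧ φ ∈ V 0 ∧ S.IsParsevalFrameFor φ (V 0)

/-- `m` is an `H⊥`-periodic function belonging to `L²(U*)` (extended
`H⊥`-periodically to the whole dual group). -/
def IsFilter (m : Vil p → ℂ) : Prop :=
  (∀ ω : Vil p, ∀ h ∈ Hsub p, m (ω + h) = m ω) ∧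
    MemLp m 2 (S.ν.restrict (Uset p))

/-- The bracket `[g₁, g₂](ω) = Σ_{h∈H⊥} g₁(ω ⊕ h) conj (g₂(ω ⊕ h))`. -/
def brkt (g₁ g₂ : Vil p → ℂ) (ω : Vil p) : ℂ :=
  ∑' h : Hsub p, g₁ (ω + (h : Vil p)) * conj (g₂ (ω + (h : Vil p)))

end VilenkinSetting

/-! ### Additional notions used in the Cantor-dyadic-group (p = 2) setting -/

/-- `Λ₁ = {n ∈ Λ : σ n ∈ Λ}`. -/
def Lam1 (p : ℕ) : Set (Vil p) :=
  {n | n ∈ Hsub p ∧ (shiftMap p).symm n ∈ Hsub p}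

/-- `Λ ∖ Λ₁`. -/
def LamO (p : ℕ) : Set (Vil p) := (Hsub p : Set (Vil p)) \ Lam1 p

namespace VilenkinSetting

variable {p : ℕ} (S : VilenkinSetting p)

/-- `Σ_{n ∈ s} |φ̂(σ(ω + n))|²` for a subset `s` of the lattice. -/
def sumShift (φ : Lp ℂ 2 S.μ) (s : Set (Vil p)) (ω : Vil p) : ℝ≥0∞ :=
  ∑' n : s, (‖S.F φ ((shiftMap p).symm (ω + (n : Vil p)))‖₊ : ℝ≥0∞) ^ 2

/-- `Δ₂ = {ω ∈ D : Σ_{n∈Λ₁}|φ̂(σ(ω+n))|² ≠ 0 and Σ_{n∈Λ∖Λ₁}|φ̂(σ(ω+n))|² ≠ 0}`. -/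
def Delta2 (φ : Lp ℂ 2 S.μ) : Set (Vil p) :=
  {ω ∈ Uset p | S.sumShift φ (Lam1 p) ω ≠ 0 ∧ S.sumShift φ (LamO p) ω ≠ 0}

/-- `Δ₁`: exactly one of the two partial periodizations is nonzero. -/
def Delta1 (φ : Lp ℂ 2 S.μ) : Set (Vil p) :=
  {ω ∈ Uset p |
    (S.sumShift φ (Lam1 p) ω ≠ 0 ∧ S.sumShift φ (LamO p) ω = 0) ∨
    (S.sumShift φ (Lam1 p) ω = 0 ∧ S.sumShift φ (LamO p) ω ≠ 0)}

/-- The blocked set `E = {ω ∈ Δ₂ : m(σω) = m(σω + 0.1) = 0}`. -/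
def blockedSet (φ : Lp ℂ 2 S.μ) (m : Vil p → ℂ) : Set (Vil p) :=
  {ω ∈ S.Delta2 φ |
    m ((shiftMap p).symm ω) = 0 ∧ m ((shiftMap p).symm ω + dotEl p 1) = 0}

/-- The spectrum `η(V₀) = {ω ∈ D : Σ_{n∈Λ}|φ̂(ω+n)|² ≠ 0}` of `V₀ = ⟨φ⟩`. -/
def etaV0 (φ : Lp ℂ 2 S.μ) : Set (Vil p) := {ω ∈ Uset p | S.Pper φ ω ≠ 0}

/-- `W₀`, the orthogonal complement of `V₀` in `V₁`. -/
def Wcompl (V : ℤ → Submodule ℂ (Lp ℂ 2 S.μ)) : Submodule ℂ (Lp ℂ 2 S.μ) :=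
  V 1 ⊓ (V 0)ᗮ

/-- Integer powers `𝔻^j` of the dilation operator. -/
def dilZ (j : ℤ) (f : Lp ℂ 2 S.μ) : Lp ℂ 2 S.μ :=
  if 0 ≤ j then (fun g => S.Dil g)^[j.toNat] f
  else (fun g => S.Dil.symm g)^[(-j).toNat] f

end VilenkinSetting

namespace VilenkinSetting

/-- The filter `m_ψ` of the candidate frame wavelet on the Cantor dyadic
group (`p = 2`):
`m_ψ(ω) = (−1)^{ω₀} conj(m(σω + 0.1)) Σ_{n'∈Λ∖Λ₁}|φ̂(σ(ω+n'))|²` on `Δ₂ + Λ`,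
`1` on `(Δ₁ ∩ η(V₀)ᶜ) + Λ` and `0` otherwise. -/
def mpsi (S : VilenkinSetting 2) (φ : Lp ℂ 2 S.μ) (m : Vil 2 → ℂ) (ω : Vil 2) : ℂ :=
  if ω ∈ S.Delta2 φ + (Hsub 2 : Set (Vil 2)) then
    (-1 : ℂ) ^ ((ω : ℤ → ZMod 2) 0).val *
      conj (m ((shiftMap 2).symm ω + dotEl 2 1)) *
      ((S.sumShift φ (LamO 2) ω).toReal : ℂ)
  else if ω ∈ (S.Delta1 φ ∩ (S.etaV0 φ)ᶜ) + (Hsub 2 : Set (Vil 2)) then 1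
  else 0

/-- `ψ̂ = m_ψ · (φ̂ ∘ σ)`, the Fourier transform of the candidate frame
wavelet. -/
def psiHat (S : VilenkinSetting 2) (φ : Lp ℂ 2 S.μ) (m : Vil 2 → ℂ) (ω : Vil 2) : ℂ :=
  S.mpsi φ m ω * S.F φ ((shiftMap 2).symm ω)

end VilenkinSetting

/-!
Write `P` for the `Λ`-periodization of `|φ̂|²`, `σ = ρ⁻¹` and `e = 0.1`. The lattice `Λ` is the
disjoint union of `Λ₁ = ρ Λ` and `Λ ∖ Λ₁ = ρ (Λ + e)`, so a sum over `n ∈ Λ` of a function of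
`σ (ω + n)` splits into sums over `σ ω + Λ` and `σ ω + e + Λ`, and a `Λ`-periodic factor comes out
of each. For `|φ̂|²` and the refinement equation this gives
`P ω = |m (σ ω)|² P (σ ω) + |m (σ ω + e)|² P (σ ω + e)`; for `|ψ̂|²`, whose factor
`|m_ψ|² = |m (σ · + e)|² P (σ · + e)²` is periodic on `Δ₂ + Λ`, it gives
`|m (σ ω + e)|² P (σ ω + e)² P (σ ω) + |m (σ ω)|² P (σ ω)² P (σ ω + e)`, which is
`P ω · P (σ ω) · P (σ ω + e)`.

Measure theory is needed only to make these identities hold for a.e. `ω`: `σ` preserves null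
sets since `ν.map σ` is again translation invariant, hence equal to `2 • ν` (an invariant measure
is determined by its value on `U`), and `P < ∞` a.e. because `∫_U P = ‖φ̂‖²`.
-/

lemma ENNReal.nnnorm_toReal (x : ℝ≥0∞) : ‖x.toReal‖₊ = x.toNNReal :=
  NNReal.eq (Real.norm_of_nonneg ENNReal.toReal_nonneg)

namespace Vil

variable {p : ℕ}

lemma ext {x y : Vil p} (h : ∀ j, x.1 j = y.1 j) : x = y := Subtype.ext (funext h)

@[simp] lemma shiftMap_apply (x : Vil p) (j : ℤ) : (shiftMap p x).1 j = x.1 (j + 1) := rfl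

@[simp] lemma shiftMap_symm_apply (x : Vil p) (j : ℤ) :
    ((shiftMap p).symm x).1 j = x.1 (j - 1) := rfl

lemma add_self (x : Vil 2) : x + x = 0 :=
  ext fun j => (by decide : ∀ a : ZMod 2, a + a = 0) _

def single (i : ℤ) (a : ZMod p) : Vil p :=
  ⟨fun j => if j = i then a else 0, ⟨i, fun _ hj => if_neg hj.ne⟩⟩

@[simp] lemma single_apply (i : ℤ) (a : ZMod p) (j : ℤ) :
    (single i a).1 j = if j = i then a else 0 := rfl

lemma dotEl_eq_single (a : ZMod p) : dotEl p a = single 1 a := rfl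

def trunc (l : ℤ) (x : Vil p) : Vil p :=
  ⟨fun j => if j ≤ l then x.1 j else 0, by
    obtain ⟨k, hk⟩ := x.2
    exact ⟨k, fun j hj => by simp [hk j hj]⟩⟩

lemma trunc_apply_of_lt {l j : ℤ} (x : Vil p) (h : l < j) : (trunc l x).1 j = 0 :=
  if_neg (by omega)

lemma trunc_mem_Hsub (x : Vil p) : trunc 0 x ∈ Hsub p := fun _ hj => trunc_apply_of_lt x hj

lemma sub_trunc_mem_Uset (x : Vil p) : x - trunc 0 x ∈ Uset p := fun j hj => by
  simp [trunc, sub_eq_add_neg, hj]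

lemma countable_setOf_forall_gt_eq_zero (l : ℤ) :
    {x : Vil p | ∀ j > l, x.1 j = 0}.Countable := by
  have : Countable (ZMod p) := by
    cases p
    · exact inferInstanceAs (Countable ℤ)
    · exact inferInstanceAs (Countable (Fin _))
  have hfin : ∀ x : Vil p, (∀ j > l, x.1 j = 0) → {j | x.1 j ≠ 0}.Finite := by
    intro x hx
    obtain ⟨k, hk⟩ := x.2
    refine (Set.finite_Icc k l).subset fun j hj => ⟨?_, ?_⟩
    · by_contra h; exact hj (hk j (by omega))
    · by_contra h; exact hj (hx j (by omega))
  rw [← Set.countable_coe_iff]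
  refine Function.Injective.countable
    (f := fun x : {x : Vil p | ∀ j > l, x.1 j = 0} =>
      Finsupp.mk (hfin x.1 x.2).toFinset x.1.1 (fun j => by simp)) fun a b hab => ?_
  exact Subtype.ext (ext fun j => DFunLike.congr_fun hab j)

instance : Countable (Hsub p) := (countable_setOf_forall_gt_eq_zero 0).to_subtype

lemma countable_Lam1 : (Lam1 p).Countable :=
  (countable_setOf_forall_gt_eq_zero 0).mono fun _ hx => hx.1

lemma countable_LamO : (LamO p).Countable :=
  (countable_setOf_forall_gt_eq_zero 0).mono fun _ hx => hx.1

/-- The coset `x + U_l`. -/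
def cyl (x : Vil p) (l : ℤ) : Set (Vil p) := {y | ∀ j ≤ l, y.1 j = x.1 j}

lemma image_add_UsetL (x : Vil p) (l : ℤ) : (x + ·) '' UsetL p l = cyl x l := by
  ext y
  constructor
  · rintro ⟨u, hu, rfl⟩ j hj
    simp [hu j hj]
  · refine fun hy => ⟨y - x, fun j hj => ?_, add_sub_cancel x y⟩
    simp [sub_eq_add_neg, hy j hj]

lemma UsetL_eq_cyl_zero (l : ℤ) : UsetL p l = cyl 0 l := rfl

lemma mem_cyl_self (x : Vil p) (l : ℤ) : x ∈ cyl x l := fun _ _ => rfl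

lemma cyl_eq_of_mem {x y : Vil p} {l : ℤ} (h : y ∈ cyl x l) : cyl x l = cyl y l := by
  ext z
  exact forall₂_congr fun j hj => by rw [h j hj]

lemma cyl_inter_cyl (x : Vil p) (l l' : ℤ) : cyl x l ∩ cyl x l' = cyl x (max l l') := by
  ext y
  refine ⟨fun ⟨h, h'⟩ j hj => ?_,
    fun h => ⟨fun j hj => h j (by omega), fun j hj => h j (by omega)⟩⟩
  rcases le_or_gt j l with hl | hl
  · exact h j hl
  · exact h' j (by omega)

lemma trunc_mem_cyl (x : Vil p) (l : ℤ) : trunc l x ∈ cyl x l := fun _ hj => if_pos hj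

lemma preimage_add_cyl (x : Vil p) (l : ℤ) : (· + x) ⁻¹' cyl x l = UsetL p l := by
  ext y
  exact forall₂_congr fun j _ => by simp

lemma preimage_shiftMap_symm_cyl (x : Vil p) (l : ℤ) :
    (shiftMap p).symm ⁻¹' cyl x l = cyl (shiftMap p x) (l - 1) := by
  ext y
  exact ⟨fun h j hj => by simpa using h (j + 1) (by omega),
    fun h j hj => by simpa using h (j - 1) (by omega)⟩

def cylinders (p : ℕ) : Set (Set (Vil p)) := {s | ∃ x l, s = cyl x l}

lemma cyl_mem_cylinders (x : Vil p) (l : ℤ) : cyl x l ∈ cylinders p := ⟨x, l, rfl⟩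

lemma topology_eq_generateFrom_cylinders :
    (inferInstance : TopologicalSpace (Vil p)) = .generateFrom (cylinders p) := by
  change TopologicalSpace.generateFrom _ = _
  simp only [image_add_UsetL]
  rfl

lemma isPiSystem_cylinders : IsPiSystem (cylinders p) := by
  rintro _ ⟨x, l, rfl⟩ _ ⟨x', l', rfl⟩ ⟨y, hy, hy'⟩
  rw [cyl_eq_of_mem hy, cyl_eq_of_mem hy', cyl_inter_cyl]
  exact cyl_mem_cylinders y _

lemma countable_cylinders : (cylinders p).Countable := by
  refine (Set.countable_iUnion fun l =>
    (countable_setOf_forall_gt_eq_zero (p := p) l).image (cyl · l)).mono ?_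
  rintro _ ⟨x, l, rfl⟩
  exact Set.mem_iUnion.2 ⟨l, trunc l x, fun _ => trunc_apply_of_lt x,
    (cyl_eq_of_mem (trunc_mem_cyl x l)).symm⟩

lemma isTopologicalBasis_cylinders : TopologicalSpace.IsTopologicalBasis (cylinders p) :=
  ⟨fun s hs t ht y hy => ⟨s ∩ t, isPiSystem_cylinders s hs t ht ⟨y, hy⟩, hy, le_rfl⟩,
    Set.eq_univ_of_forall fun y => ⟨cyl y 0, cyl_mem_cylinders y 0, mem_cyl_self y 0⟩,
    topology_eq_generateFrom_cylinders⟩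

instance : SecondCountableTopology (Vil p) :=
  isTopologicalBasis_cylinders.secondCountableTopology countable_cylinders

instance : BorelSpace (Vil p) := ⟨rfl⟩

lemma measurableSpace_eq_generateFrom_cylinders :
    (inferInstance : MeasurableSpace (Vil p)) = .generateFrom (cylinders p) :=
  borel_eq_generateFrom_of_subbasis topology_eq_generateFrom_cylinders

lemma measurableSet_cyl (x : Vil p) (l : ℤ) : MeasurableSet (cyl x l) :=
  (isTopologicalBasis_cylinders.isOpen (cyl_mem_cylinders x l)).measurableSet

lemma measurableSet_Uset : MeasurableSet (Uset p) := measurableSet_cyl 0 0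

lemma measurable_shiftMap_symm : Measurable ((shiftMap p).symm : Vil p → Vil p) := by
  refine Continuous.measurable (continuous_generateFrom_iff.2 ?_)
  rintro _ ⟨x, l, rfl⟩
  rw [image_add_UsetL, preimage_shiftMap_symm_cyl]
  exact isTopologicalBasis_cylinders.isOpen (cyl_mem_cylinders _ _)

lemma UsetL_eq_union (l : ℤ) :
    UsetL 2 l = UsetL 2 (l + 1) ∪ cyl (single (l + 1) 1) (l + 1) := by
  have split : ∀ P : ℤ → Prop, (∀ j ≤ l + 1, P j) ↔ (∀ j ≤ l, P j) ∧ P (l + 1) := fun P =>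
    ⟨fun h => ⟨fun j hj => h j (by omega), h _ le_rfl⟩, fun ⟨h, h'⟩ j hj =>
      (eq_or_lt_of_le hj).elim (· ▸ h') fun hj => h j (by omega)⟩
  have hcyl (y : Vil 2) :
      y ∈ cyl (single (l + 1) 1) (l + 1) ↔ (∀ j ≤ l, y.1 j = 0) ∧ y.1 (l + 1) = 1 :=
    (split _).trans (and_congr (forall₂_congr fun j hj => by simp [show j ≠ l + 1 by omega])
      (by simp))
  ext y
  change (∀ j ≤ l, y.1 j = 0) ↔ (∀ j ≤ l + 1, y.1 j = 0) ∨ _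
  rw [hcyl, split, ← and_or_left]
  exact (and_iff_left ((by decide : ∀ a : ZMod 2, a = 0 ∨ a = 1) _)).symm

lemma disjoint_UsetL_cyl_single (l : ℤ) :
    Disjoint (UsetL 2 (l + 1)) (cyl (single (l + 1) 1) (l + 1)) :=
  Set.disjoint_left.2 fun y h h' => by simpa [h (l + 1) le_rfl] using h' (l + 1) le_rfl

lemma pairwise_disjoint_cyl_Hsub :
    Pairwise (Function.onFun Disjoint fun h : Hsub p => cyl (h : Vil p) 0) := by
  refine fun a b hab => Set.disjoint_left.2 fun y ha hb => hab (Subtype.ext (ext fun j => ?_))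
  rcases le_or_gt j 0 with hj | hj
  · exact (ha j hj).symm.trans (hb j hj)
  · rw [a.2 j hj, b.2 j hj]

lemma iUnion_cyl_Hsub : ⋃ h : Hsub p, cyl (h : Vil p) 0 = Set.univ :=
  Set.eq_univ_of_forall fun y => Set.mem_iUnion.2
    ⟨⟨_, trunc_mem_Hsub y⟩, cyl_eq_of_mem (trunc_mem_cyl y 0) ▸ mem_cyl_self y 0⟩

lemma tsum_Hsub_add_of_mem {h : Vil p} (hh : h ∈ Hsub p) (f : Vil p → ℝ≥0∞) (ω : Vil p) :
    ∑' n : Hsub p, f (ω + h + n) = ∑' n : Hsub p, f (ω + n) := by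
  simpa only [Equiv.coe_addLeft, AddSubgroup.coe_add, add_assoc] using
    (Equiv.addLeft (⟨h, hh⟩ : Hsub p)).tsum_eq fun n => f (ω + n)

lemma tsum_Hsub_mul_of_periodic {F : Vil p → ℝ≥0∞} (hF : ∀ ζ, ∀ h ∈ Hsub p, F (ζ + h) = F ζ)
    (G : Vil p → ℝ≥0∞) (ζ : Vil p) :
    ∑' h : Hsub p, F (ζ + h) * G (ζ + h) = F ζ * ∑' h : Hsub p, G (ζ + h) := by
  rw [← ENNReal.tsum_mul_left]
  exact tsum_congr fun h => by rw [hF ζ h h.2]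

section InvariantMeasure

variable {μ : Measure (Vil p)} (hμ : ∀ g, MeasurePreserving (· + g) μ μ)
include hμ

lemma measure_cyl (x : Vil p) (l : ℤ) : μ (cyl x l) = μ (UsetL p l) := by
  rw [← preimage_add_cyl x l, (hμ x).measure_preimage (measurableSet_cyl x l).nullMeasurableSet]

lemma measurableEmbedding_add_right (g : Vil p) : MeasurableEmbedding (· + g : Vil p → Vil p) :=
  (MeasurableEquiv.mk (Equiv.addRight g) (hμ g).measurable
    (by simpa using (hμ (-g)).measurable)).measurableEmbedding

lemma lintegral_Uset_tsum_Hsub {f : Vil p → ℝ≥0∞} (hf : AEMeasurable f μ) :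
    ∫⁻ ω in Uset p, ∑' h : Hsub p, f (ω + h) ∂μ = ∫⁻ ω, f ω ∂μ := calc
  _ = ∑' h : Hsub p, ∫⁻ ω in Uset p, f (ω + h) ∂μ :=
    lintegral_tsum fun h => (hf.comp_quasiMeasurePreserving (hμ h).quasiMeasurePreserving).restrict
  _ = ∑' h : Hsub p, ∫⁻ ω in cyl (h : Vil p) 0, f ω ∂μ := tsum_congr fun h => by
    rw [Uset, ← preimage_add_cyl (h : Vil p) 0]
    exact (hμ h).setLIntegral_comp_preimage_emb (measurableEmbedding_add_right hμ h) f _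
  _ = ∫⁻ ω, f ω ∂μ := by
    rw [← lintegral_iUnion (fun h => measurableSet_cyl _ _) pairwise_disjoint_cyl_Hsub,
      iUnion_cyl_Hsub, Measure.restrict_univ]

lemma ae_of_ae_restrict_Uset {P : Vil p → Prop} (hP : ∀ ω, ∀ h ∈ Hsub p, P ω → P (ω + h))
    (hU : ∀ᵐ ω ∂μ.restrict (Uset p), P ω) : ∀ᵐ ω ∂μ, P ω := by
  have hnull : μ ({ω | ¬P ω} ∩ Uset p) = 0 :=
    nonpos_iff_eq_zero.1 ((Measure.le_restrict_apply _ _).trans (ae_iff.1 hU).le)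
  have hcover : {ω | ¬P ω} ⊆ ⋃ h : Hsub p, (· + (h : Vil p)) ⁻¹' ({ω | ¬P ω} ∩ Uset p) :=
    fun ω hω => Set.mem_iUnion.2 ⟨⟨_, (Hsub p).neg_mem (trunc_mem_Hsub ω)⟩,
      fun h => hω (by simpa using hP _ _ (trunc_mem_Hsub ω) h),
      by simpa [← sub_eq_add_neg] using sub_trunc_mem_Uset ω⟩
  exact ae_iff.2 (measure_mono_null hcover
    (measure_iUnion_null fun h => (hμ h).quasiMeasurePreserving.preimage_null hnull))

end InvariantMeasure

section DyadicInvariantMeasure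

variable {μ : Measure (Vil 2)} (hμ : ∀ g, MeasurePreserving (· + g) μ μ)
include hμ

lemma measure_UsetL_eq_two_mul (l : ℤ) : μ (UsetL 2 l) = 2 * μ (UsetL 2 (l + 1)) := by
  rw [UsetL_eq_union l, measure_union (disjoint_UsetL_cyl_single l) (measurableSet_cyl _ _),
    measure_cyl hμ, two_mul]

lemma measure_UsetL (hU : μ (Uset 2) = 1) (l : ℤ) : μ (UsetL 2 l) = 2 ^ (-l) := by
  have two_zpow_add (m n : ℤ) : (2 : ℝ≥0∞) ^ (m + n) = 2 ^ m * 2 ^ n :=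
    ENNReal.zpow_add two_ne_zero ENNReal.ofNat_ne_top m n
  induction l using Int.induction_on with
  | zero => simpa [Uset] using hU
  | succ k ih =>
    refine (ENNReal.mul_right_inj two_ne_zero ENNReal.ofNat_ne_top).1 ?_
    rw [← measure_UsetL_eq_two_mul hμ, ih, show -(k : ℤ) = 1 + -(k + 1) by ring, two_zpow_add,
      zpow_one]
  | pred k ih =>
    have h := measure_UsetL_eq_two_mul hμ (-k - 1)
    rw [sub_add_cancel, ih] at h
    rw [h, show -(-(k : ℤ) - 1) = 1 + -(-k) by ring, two_zpow_add, zpow_one]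

end DyadicInvariantMeasure

lemma measure_eq_of_measurePreserving_add {μ ν : Measure (Vil 2)}
    (hμ : ∀ g, MeasurePreserving (· + g) μ μ) (hν : ∀ g, MeasurePreserving (· + g) ν ν)
    (hμU : μ (Uset 2) = 1) (hνU : ν (Uset 2) = 1) : μ = ν := by
  refine Measure.ext_of_generateFrom_of_cover_subset measurableSpace_eq_generateFrom_cylinders
    isPiSystem_cylinders (T := (cyl · 0) '' (Hsub 2 : Set (Vil 2))) ?_
    ((countable_setOf_forall_gt_eq_zero 0).image _) ?_ ?_ ?_
  · rintro _ ⟨x, -, rfl⟩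
    exact cyl_mem_cylinders x 0
  · rw [Set.sUnion_image, Set.biUnion_eq_iUnion]
    exact iUnion_cyl_Hsub
  · rintro _ ⟨x, -, rfl⟩
    rw [measure_cyl hμ]
    exact hμU ▸ ENNReal.one_ne_top
  · rintro _ ⟨x, l, rfl⟩
    rw [measure_cyl hμ, measure_cyl hν, measure_UsetL hμ hμU, measure_UsetL hν hνU]

section Lattice

local notation "σ" => AddEquiv.symm (shiftMap 2)

lemma shiftMap_symm_add_dotEl_mem_Hsub {n : Vil 2} (hn : n ∈ LamO 2) :
    σ n + dotEl 2 1 ∈ Hsub 2 := by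
  obtain ⟨hn, hσn⟩ := hn
  have h0 : n.1 0 = 1 := by
    by_contra h
    refine hσn ⟨hn, fun j hj => ?_⟩
    rcases (show j = 1 ∨ 1 < j by omega) with rfl | hj
    · simpa using (by decide : ∀ a : ZMod 2, a ≠ 1 → a = 0) _ h
    · simpa using hn (j - 1) (by omega)
  intro j hj
  rcases (show j = 1 ∨ 1 < j by omega) with rfl | hj
  · simpa [dotEl_eq_single, h0] using (by decide : (1 : ZMod 2) + 1 = 0)
  · simp [dotEl_eq_single, hj.ne', hn (j - 1) (by omega)]

def equivLam1 : Hsub 2 ≃ Lam1 2 where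
  toFun h := ⟨shiftMap 2 h, fun j hj => by simpa using h.2 (j + 1) (by omega), by simp⟩
  invFun n := ⟨σ n, n.2.2⟩
  left_inv h := by simp
  right_inv n := by simp

def equivLamO : Hsub 2 ≃ LamO 2 where
  toFun h := ⟨shiftMap 2 (h + dotEl 2 1),
    fun j hj => by simpa [dotEl_eq_single, show j + 1 ≠ 1 by omega] using h.2 (j + 1) (by omega),
    fun hmem => by simpa [dotEl_eq_single, h.2 1 one_pos] using hmem.2 1 one_pos⟩
  invFun n := ⟨σ n + dotEl 2 1, shiftMap_symm_add_dotEl_mem_Hsub n.2⟩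
  left_inv h := by simp [add_assoc, add_self]
  right_inv n := by simp [add_assoc, add_self]

lemma tsum_Hsub_eq_tsum_Lam1_add_tsum_LamO (f : Vil 2 → ℝ≥0∞) :
    ∑' n : Hsub 2, f n = ∑' n : Lam1 2, f n + ∑' n : LamO 2, f n := by
  have hunion : Lam1 2 ∪ LamO 2 = Hsub 2 := Set.union_sdiff_cancel fun _ hx => hx.1
  have hdisj : Disjoint (Lam1 2) (LamO 2) := Set.disjoint_sdiff_right
  rw [← ENNReal.summable.tsum_union_disjoint (f := f) hdisj ENNReal.summable, hunion]
  rfl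

lemma tsum_Lam1_comp_shiftMap_symm (f : Vil 2 → ℝ≥0∞) (ω : Vil 2) :
    ∑' n : Lam1 2, f (σ (ω + n)) = ∑' h : Hsub 2, f (σ ω + h) := by
  rw [← equivLam1.tsum_eq]
  exact tsum_congr fun h => by simp [equivLam1]

lemma tsum_LamO_comp_shiftMap_symm (f : Vil 2 → ℝ≥0∞) (ω : Vil 2) :
    ∑' n : LamO 2, f (σ (ω + n)) = ∑' h : Hsub 2, f (σ ω + dotEl 2 1 + h) := by
  rw [← equivLamO.tsum_eq]
  exact tsum_congr fun h => by simp [equivLamO, add_assoc, add_comm (h : Vil 2)]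

lemma tsum_Hsub_mul_comp_shiftMap_symm {F : Vil 2 → ℝ≥0∞}
    (hF : ∀ ζ, ∀ h ∈ Hsub 2, F (ζ + h) = F ζ) (G : Vil 2 → ℝ≥0∞) (ω : Vil 2) :
    ∑' n : Hsub 2, F (σ (ω + n)) * G (σ (ω + n)) =
      F (σ ω) * ∑' h : Hsub 2, G (σ ω + h) +
        F (σ ω + dotEl 2 1) * ∑' h : Hsub 2, G (σ ω + dotEl 2 1 + h) := by
  rw [tsum_Hsub_eq_tsum_Lam1_add_tsum_LamO (fun n => F (σ (ω + n)) * G (σ (ω + n))),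
    tsum_Lam1_comp_shiftMap_symm (fun ζ => F ζ * G ζ),
    tsum_LamO_comp_shiftMap_symm (fun ζ => F ζ * G ζ),
    tsum_Hsub_mul_of_periodic hF, tsum_Hsub_mul_of_periodic hF]

end Lattice

end Vil

namespace VilenkinSetting

open Vil

lemma perF_add_of_mem_Hsub {p : ℕ} (g : Vil p → ℂ) {h : Vil p} (hh : h ∈ Hsub p) (ω : Vil p) :
    perF g (ω + h) = perF g ω :=
  tsum_Hsub_add_of_mem hh (fun x => (‖g x‖₊ : ℝ≥0∞) ^ 2) ω

lemma ae_perF_ne_top {p : ℕ} {μ : Measure (Vil p)} (hμ : ∀ g, MeasurePreserving (· + g) μ μ)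
    {g : Vil p → ℂ} (hg : MemLp g 2 μ) : ∀ᵐ ω ∂μ, perF g ω ≠ ∞ := by
  have hsq : AEMeasurable (fun ω => (‖g ω‖₊ : ℝ≥0∞) ^ 2) μ :=
    hg.1.aemeasurable.nnnorm.coe_nnreal_ennreal.pow_const 2
  have hint : ∫⁻ ω, (‖g ω‖₊ : ℝ≥0∞) ^ 2 ∂μ ≠ ∞ := by
    simpa [enorm_eq_nnnorm] using (lintegral_rpow_enorm_lt_top_of_eLpNorm_lt_top two_ne_zero
      ENNReal.ofNat_ne_top hg.eLpNorm_lt_top).ne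
  refine ae_of_ae_restrict_Uset hμ (fun ω h hh hω => by rwa [perF_add_of_mem_Hsub g hh]) ?_
  refine (ae_lt_top' (AEMeasurable.tsum fun h : Hsub p =>
    hsq.comp_quasiMeasurePreserving (hμ h).quasiMeasurePreserving).restrict ?_).mono
    fun _ => ne_of_lt
  exact (lintegral_Uset_tsum_Hsub hμ hsq).trans_ne hint

local notation "σ" => AddEquiv.symm (shiftMap 2)

variable (S : VilenkinSetting 2)

lemma map_shiftMap_symm_ν : S.ν.map σ = (2 : ℝ≥0∞) • S.ν := by
  have hσ : Measurable (σ : Vil 2 → Vil 2) := measurable_shiftMap_symm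
  have hinv (g : Vil 2) : MeasurePreserving (· + g) (S.ν.map σ) (S.ν.map σ) := by
    refine ⟨(S.ν_inv g).measurable, ?_⟩
    have hcomm : (· + g) ∘ σ = σ ∘ (· + shiftMap 2 g) := by
      ext1 y
      simp
    rw [Measure.map_map (S.ν_inv g).measurable hσ, hcomm,
      ← Measure.map_map hσ (S.ν_inv _).measurable, (S.ν_inv _).map_eq]
  have hU : S.ν.map σ (Uset 2) = 2 := by
    rw [Measure.map_apply hσ measurableSet_Uset, Uset, UsetL_eq_cyl_zero,
      preimage_shiftMap_symm_cyl, map_zero, ← UsetL_eq_cyl_zero, measure_UsetL S.ν_inv S.ν_U]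
    norm_num
  have h := measure_eq_of_measurePreserving_add (fun g => (hinv g).smul_measure (2⁻¹ : ℝ≥0∞))
    S.ν_inv (by rw [Measure.smul_apply, hU, smul_eq_mul, ENNReal.inv_mul_cancel two_ne_zero
      ENNReal.ofNat_ne_top]) S.ν_U
  conv_rhs => rw [← h]
  rw [smul_smul, ENNReal.mul_inv_cancel two_ne_zero ENNReal.ofNat_ne_top, one_smul]

lemma quasiMeasurePreserving_shiftMap_symm : Measure.QuasiMeasurePreserving σ S.ν S.ν :=
  ⟨measurable_shiftMap_symm, by
    rw [S.map_shiftMap_symm_ν]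
    exact Measure.smul_absolutelyContinuous⟩

variable (φ : Lp ℂ 2 S.μ)

lemma ae_Pper_ne_top : ∀ᵐ ω ∂S.ν, S.Pper φ ω ≠ ∞ :=
  ae_perF_ne_top S.ν_inv (Lp.memLp _)

lemma aemeasurable_sumShift {s : Set (Vil 2)} (hs : s.Countable) :
    AEMeasurable (S.sumShift φ s) S.ν :=
  have := hs.to_subtype
  AEMeasurable.tsum fun n =>
    ((Lp.aestronglyMeasurable (S.F φ)).aemeasurable.comp_quasiMeasurePreserving
      (S.quasiMeasurePreserving_shiftMap_symm.comp (S.ν_inv n).quasiMeasurePreserving)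
      ).nnnorm.coe_nnreal_ennreal.pow_const 2

lemma nullMeasurableSet_Delta2 : NullMeasurableSet (S.Delta2 φ) S.ν :=
  measurableSet_Uset.nullMeasurableSet.inter
    (((S.aemeasurable_sumShift φ countable_Lam1).nullMeasurable
        (measurableSet_singleton 0).compl).inter
      ((S.aemeasurable_sumShift φ countable_LamO).nullMeasurable
        (measurableSet_singleton 0).compl))

lemma Pper_add_of_mem_Hsub {h : Vil 2} (hh : h ∈ Hsub 2) (ω : Vil 2) :
    S.Pper φ (ω + h) = S.Pper φ ω :=
  perF_add_of_mem_Hsub _ hh ω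

lemma sumShift_LamO_eq (ω : Vil 2) :
    S.sumShift φ (LamO 2) ω = S.Pper φ (σ ω + dotEl 2 1) :=
  tsum_LamO_comp_shiftMap_symm (fun ζ => (‖S.F φ ζ‖₊ : ℝ≥0∞) ^ 2) ω

lemma nnnorm_mpsi_sq (m : Vil 2 → ℂ) {ω : Vil 2}
    (hω : ω ∈ S.Delta2 φ + (Hsub 2 : Set (Vil 2))) :
    (‖S.mpsi φ m ω‖₊ : ℝ≥0∞) ^ 2 = (‖m (σ ω + dotEl 2 1)‖₊ : ℝ≥0∞) ^ 2 *
      ((S.Pper φ (σ ω + dotEl 2 1)).toNNReal : ℝ≥0∞) ^ 2 := by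
  rw [mpsi, if_pos hω, sumShift_LamO_eq]
  simp [nnnorm_mul, mul_pow, ENNReal.nnnorm_toReal]

variable {m : Vil 2 → ℂ} (hm : ∀ ζ, ∀ h ∈ Hsub 2, m (ζ + h) = m ζ)
include hm

lemma Pper_eq_of_refinement {ω : Vil 2}
    (hr : ∀ n : Hsub 2, S.F φ (ω + n) = m (σ (ω + n)) * S.F φ (σ (ω + n))) :
    S.Pper φ ω = (‖m (σ ω)‖₊ : ℝ≥0∞) ^ 2 * S.Pper φ (σ ω) +
      (‖m (σ ω + dotEl 2 1)‖₊ : ℝ≥0∞) ^ 2 * S.Pper φ (σ ω + dotEl 2 1) := calc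
  S.Pper φ ω = ∑' n : Hsub 2,
      (‖m (σ (ω + n))‖₊ : ℝ≥0∞) ^ 2 * (‖S.F φ (σ (ω + n))‖₊ : ℝ≥0∞) ^ 2 :=
    tsum_congr fun n => by rw [hr n, nnnorm_mul, ENNReal.coe_mul, mul_pow]
  _ = _ := tsum_Hsub_mul_comp_shiftMap_symm (F := fun ζ => (‖m ζ‖₊ : ℝ≥0∞) ^ 2)
    (fun ζ h hh => by rw [hm ζ h hh]) (fun ζ => (‖S.F φ ζ‖₊ : ℝ≥0∞) ^ 2) ω

/- `mpsi` takes the `toReal` of `P (σ ω + e)`, which is junk where `P = ∞`. -/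
lemma perF_psiHat_eq {ω : Vil 2} (hω : ω ∈ S.Delta2 φ) (h₀ : S.Pper φ (σ ω) ≠ ∞)
    (h₁ : S.Pper φ (σ ω + dotEl 2 1) ≠ ∞) :
    perF (S.psiHat φ m) ω =
      (‖m (σ ω + dotEl 2 1)‖₊ : ℝ≥0∞) ^ 2 * S.Pper φ (σ ω + dotEl 2 1) ^ 2 * S.Pper φ (σ ω) +
        (‖m (σ ω)‖₊ : ℝ≥0∞) ^ 2 * S.Pper φ (σ ω) ^ 2 * S.Pper φ (σ ω + dotEl 2 1) := by
  set F : Vil 2 → ℝ≥0∞ := fun ζ =>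
    (‖m (ζ + dotEl 2 1)‖₊ : ℝ≥0∞) ^ 2 * ((S.Pper φ (ζ + dotEl 2 1)).toNNReal : ℝ≥0∞) ^ 2
  have hF : ∀ ζ, ∀ h ∈ Hsub 2, F (ζ + h) = F ζ := fun ζ h hh => by
    simp only [F, add_right_comm ζ h, hm _ h hh, S.Pper_add_of_mem_Hsub φ hh]
  calc perF (S.psiHat φ m) ω
      = ∑' n : Hsub 2, F (σ (ω + n)) * (‖S.F φ (σ (ω + n))‖₊ : ℝ≥0∞) ^ 2 :=
        tsum_congr fun n => by
          rw [psiHat, nnnorm_mul, ENNReal.coe_mul, mul_pow,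
            S.nnnorm_mpsi_sq φ m (Set.add_mem_add hω n.2)]
    _ = F (σ ω) * S.Pper φ (σ ω) + F (σ ω + dotEl 2 1) * S.Pper φ (σ ω + dotEl 2 1) :=
        tsum_Hsub_mul_comp_shiftMap_symm hF (fun ζ => (‖S.F φ ζ‖₊ : ℝ≥0∞) ^ 2) ω
    _ = _ := by
        simp only [F, add_assoc, add_self, add_zero, ENNReal.coe_toNNReal h₀,
          ENNReal.coe_toNNReal h₁]

end VilenkinSetting

theorem psi_periodization_product_identity_general
    (S : VilenkinSetting 2)
    (φ : Lp ℂ 2 S.μ)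
    (m : Vil 2 → ℂ) (hm : S.IsFilter m)
    (href : ∀ᵐ ω ∂S.ν, S.F φ (shiftMap 2 ω) = m ω * S.F φ ω) :
    ∀ᵐ ω ∂(S.ν.restrict (S.Delta2 φ)),
      VilenkinSetting.perF (S.psiHat φ m) ω =
        S.Pper φ ω * S.Pper φ ((shiftMap 2).symm ω) *
          S.Pper φ ((shiftMap 2).symm ω + dotEl 2 1) := by
  have hσ := S.quasiMeasurePreserving_shiftMap_symm
  have hrefine : ∀ᵐ ω ∂S.ν, ∀ n : Hsub 2, S.F φ (ω + n) =
      m ((shiftMap 2).symm (ω + n)) * S.F φ ((shiftMap 2).symm (ω + n)) :=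
    ae_all_iff.2 fun n => (S.ν_inv n).quasiMeasurePreserving.ae (by simpa using hσ.ae href)
  have hfin := S.ae_Pper_ne_top φ
  rw [ae_restrict_iff'₀ (S.nullMeasurableSet_Delta2 φ)]
  filter_upwards [hrefine, hσ.ae hfin,
    hσ.ae ((S.ν_inv (dotEl 2 1)).quasiMeasurePreserving.ae hfin)] with ω hr h₀ h₁ hω
  rw [S.perF_psiHat_eq φ hm.1 hω h₀ h₁, S.Pper_eq_of_refinement φ hm.1 hr]
  ring

/-- (Cantor dyadic group, `p = 2`.) With `|E| = 0` and
`ψ̂ = m_ψ · (φ̂ ∘ σ)`, for a.e. `ω ∈ Δ₂`: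
`Σ_{n∈Λ}|ψ̂(ω+n)|² = (Σ_{n∈Λ}|φ̂(ω+n)|²)(Σ_{n∈Λ}|φ̂(σω+n)|²)(Σ_{n∈Λ}|φ̂(σω+0.1+n)|²)`. -/
theorem psi_periodization_product_identity
    (S : VilenkinSetting 2) (V : ℤ → Submodule ℂ (Lp ℂ 2 S.μ))
    (φ : Lp ℂ 2 S.μ) (hV : S.IsFMRA V φ)
    (m : Vil 2 → ℂ) (hm : S.IsFilter m)
    (href : ∀ᵐ ω ∂S.ν, S.F φ (shiftMap 2 ω) = m ω * S.F φ ω)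
    (hE : S.ν (S.blockedSet φ m) = 0) :
    ∀ᵐ ω ∂(S.ν.restrict (S.Delta2 φ)),
      VilenkinSetting.perF (S.psiHat φ m) ω =
        S.Pper φ ω * S.Pper φ ((shiftMap 2).symm ω) *
          S.Pper φ ((shiftMap 2).symm ω + dotEl 2 1) :=
  psi_periodization_product_identity_general S φ m hm href
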